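/- arXiv:2105.02524 — 3 statements merged into one kernel-verified Lean document; each statement's English description precedes it below -/
import Mathlib

section
/- For all real ν ≥ -1 and all x > 0, the function x ↦ I_ν(x)·K_ν(x) is strictly decreasing on (0, ∞), where I_ν and K_ν are the modified Bessel functions of the first and second kind. -/
open Real

/-- Modified Bessel function of the first kind `I_ν(x)` (for `x > 0`),
defined by its standard power series. -/
noncomputable def besselI (ν x : ℝ) : ℝ :=
  ∑' k : ℕ, (x / 2) ^ (2 * k) / ((Nat.factorial k : ℝ) * Real.Gamma (k + ν + 1)) * (x / 2) ^ ν

/-- Modified Bessel function of the second kind `K_ν(x)` (for `x > 0`),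
defined by its standard integral representation. -/
noncomputable def besselK (ν x : ℝ) : ℝ :=
  ∫ t in Set.Ioi (0 : ℝ), Real.exp (-x * Real.cosh t) * Real.cosh (ν * t)



open Real MeasureTheory Filter Set

noncomputable def bc (ν : ℝ) (k : ℕ) : ℝ := 1 / ((Nat.factorial k : ℝ) * Real.Gamma (k + ν + 1))

lemma arg_nonneg {ν : ℝ} (hν : -1 ≤ ν) (k : ℕ) : 0 ≤ (k : ℝ) + ν + 1 := by
  have : (0:ℝ) ≤ k := Nat.cast_nonneg k
  linarith

lemma bc_nonneg {ν : ℝ} (hν : -1 ≤ ν) (k : ℕ) : 0 ≤ bc ν k := by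
  rcases eq_or_lt_of_le (arg_nonneg hν k) with h | h
  · have hG : Real.Gamma ((k:ℝ) + ν + 1) = 0 := by rw [← h]; exact Real.Gamma_zero
    simp [bc, hG]
  · have hG := Real.Gamma_pos_of_pos h
    have hf : (0:ℝ) < (Nat.factorial k : ℝ) := by positivity
    rw [bc]
    positivity

lemma bc_one_pos {ν : ℝ} (hν : -1 ≤ ν) : 0 < bc ν 1 := by
  have h : (0:ℝ) < (1:ℝ) + ν + 1 := by linarith
  have hG := Real.Gamma_pos_of_pos h
  simp only [bc, Nat.factorial_one, Nat.cast_one]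
  positivity

lemma bc_rec {ν : ℝ} (hν : -1 ≤ ν) (k : ℕ) :
    ((k:ℝ) + 1) * ((k:ℝ) + ν + 1) * bc ν (k + 1) = bc ν k := by
  have hcast : ((k + 1 : ℕ) : ℝ) + ν + 1 = ((k:ℝ) + ν + 1) + 1 := by push_cast; ring
  rcases eq_or_lt_of_le (arg_nonneg hν k) with h | h
  · have hG : Real.Gamma ((k:ℝ) + ν + 1) = 0 := by rw [← h]; exact Real.Gamma_zero
    rw [bc, bc, hG, hcast, ← h]
    simp
  · have hne : ((k:ℝ) + ν + 1) ≠ 0 := ne_of_gt h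
    have hG := Real.Gamma_pos_of_pos h
    have hGrec : Real.Gamma (((k:ℝ) + ν + 1) + 1) = ((k:ℝ) + ν + 1) * Real.Gamma ((k:ℝ) + ν + 1) :=
      Real.Gamma_add_one hne
    rw [bc, bc, hcast, hGrec, Nat.factorial_succ]
    have hf : (0:ℝ) < (Nat.factorial k : ℝ) := by positivity
    push_cast
    field_simp

lemma gamma_fact {ν : ℝ} (hν : -1 ≤ ν) :
    ∀ k : ℕ, Real.Gamma (ν + 2) * (Nat.factorial k : ℝ) ≤ Real.Gamma ((k:ℝ) + 1 + ν + 1) := by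
  intro k
  induction k with
  | zero => simp; apply le_of_eq; congr 1; ring
  | succ n ih =>
    have h1 : (0:ℝ) < (n:ℝ) + 1 + ν + 1 := by
      have : (0:ℝ) ≤ n := Nat.cast_nonneg n
      linarith
    have hGrec : Real.Gamma (((n:ℝ) + 1 + ν + 1) + 1)
        = ((n:ℝ) + 1 + ν + 1) * Real.Gamma ((n:ℝ) + 1 + ν + 1) :=
      Real.Gamma_add_one (ne_of_gt h1)
    have hcast : ((n + 1 : ℕ) : ℝ) + 1 + ν + 1 = ((n:ℝ) + 1 + ν + 1) + 1 := by push_cast; ring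
    rw [hcast, hGrec, Nat.factorial_succ]
    push_cast
    have hGpos : 0 < Real.Gamma (ν + 2) := Real.Gamma_pos_of_pos (by linarith)
    have hfn : (0:ℝ) ≤ (Nat.factorial n : ℝ) := by positivity
    have key := mul_le_mul_of_nonneg_left ih (le_of_lt h1)
    nlinarith [key, mul_nonneg (mul_nonneg hGpos.le hfn) (by linarith : (0:ℝ) ≤ ν + 1)]

lemma bc_le {ν : ℝ} (hν : -1 ≤ ν) (k : ℕ) :
    bc ν k ≤ (max (bc ν 0) (1 / Real.Gamma (ν + 2))) / (Nat.factorial k : ℝ) := by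
  cases k with
  | zero => simpa using le_max_left _ _
  | succ n =>
    have hGpos : 0 < Real.Gamma (ν + 2) := Real.Gamma_pos_of_pos (by linarith)
    have hfn : (0:ℝ) < (Nat.factorial n : ℝ) := by positivity
    have hfn1 : (0:ℝ) < (Nat.factorial (n+1) : ℝ) := by positivity
    have hge := gamma_fact hν n
    have hcast : ((n + 1 : ℕ) : ℝ) + ν + 1 = (n:ℝ) + 1 + ν + 1 := by push_cast; ring
    have hGpos2 : 0 < Real.Gamma ((n:ℝ) + 1 + ν + 1) :=
      lt_of_lt_of_le (by positivity) hge
    have h1 : bc ν (n+1) = 1 / ((Nat.factorial (n+1) : ℝ) * Real.Gamma ((n:ℝ) + 1 + ν + 1)) := by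
      rw [bc, hcast]
    have hone : (1:ℝ) ≤ (Nat.factorial n : ℝ) := by exact_mod_cast Nat.factorial_pos n
    calc bc ν (n+1) = 1 / ((Nat.factorial (n+1) : ℝ) * Real.Gamma ((n:ℝ) + 1 + ν + 1)) := h1
      _ ≤ (1 / Real.Gamma (ν + 2)) / (Nat.factorial (n+1) : ℝ) := by
          rw [div_div]
          apply one_div_le_one_div_of_le (by positivity)
          have hGge : Real.Gamma (ν + 2) ≤ Real.Gamma ((n:ℝ) + 1 + ν + 1) :=
            le_trans (by nlinarith) hge
          nlinarith [mul_le_mul_of_nonneg_left hGge hfn1.le]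
      _ ≤ (max (bc ν 0) (1 / Real.Gamma (ν + 2))) / (Nat.factorial (n+1) : ℝ) := by
          gcongr
          exact le_max_right _ _

lemma summable_master (R : ℝ) (hR : 0 ≤ R) :
    Summable (fun k : ℕ => ((k:ℝ) + 1) ^ 2 * R ^ k / (Nat.factorial k : ℝ)) := by
  apply summable_of_ratio_norm_eventually_le (r := 1/2) (by norm_num)
  filter_upwards [eventually_ge_atTop (⌈(8:ℝ) * R⌉₊)] with k hk
  have hk' : 8 * R ≤ (k : ℝ) := le_trans (Nat.le_ceil _) (Nat.cast_le.2 hk)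
  have hfk : (0:ℝ) < (Nat.factorial k : ℝ) := by positivity
  have hfk1 : (0:ℝ) < (Nat.factorial (k+1) : ℝ) := by positivity
  have hRk : (0:ℝ) ≤ R ^ k := pow_nonneg hR k
  rw [Real.norm_of_nonneg (by positivity), Real.norm_of_nonneg (by positivity)]
  rw [← mul_div_assoc, div_le_div_iff₀ hfk1 (by positivity)]
  have hfs : ((Nat.factorial (k+1) : ℝ)) = ((k:ℝ)+1) * (Nat.factorial k : ℝ) := by
    rw [Nat.factorial_succ]; push_cast; ring
  have hcast : (((k+1:ℕ)):ℝ) = (k:ℝ) + 1 := by push_cast; ring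
  rw [hcast, hfs, pow_succ R k]
  have hkey : (((k:ℝ)+1) + 1)^2 * R * 2 ≤ ((k:ℝ)+1)^3 := by
    have hk0 : (0:ℝ) ≤ (k:ℝ) := Nat.cast_nonneg k
    have h1 : ((k:ℝ)+2)^2 ≤ 4*((k:ℝ)+1)^2 := by nlinarith
    have h2 : 8*R*((k:ℝ)+1)^2 ≤ (k:ℝ)*((k:ℝ)+1)^2 :=
      mul_le_mul_of_nonneg_right hk' (sq_nonneg _)
    have h3 : R*((k:ℝ)+2)^2 ≤ R*(4*((k:ℝ)+1)^2) := mul_le_mul_of_nonneg_left h1 hR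
    nlinarith [h2, h3, sq_nonneg ((k:ℝ)+1)]
  nlinarith [mul_le_mul_of_nonneg_right hkey (mul_nonneg hRk hfk.le), hfk, hRk,
    mul_nonneg hRk hfk.le]

lemma summable_bc_mul {ν : ℝ} (hν : -1 ≤ ν) (y : ℝ) (p : ℕ → ℝ) (C : ℝ)
    (hp : ∀ k, |p k| ≤ C * ((k:ℝ) + 1) ^ 2) :
    Summable (fun k : ℕ => p k * bc ν k * y ^ k) := by
  set M := max (bc ν 0) (1 / Real.Gamma (ν + 2)) with hM
  have hM0 : 0 ≤ M := le_trans (bc_nonneg hν 0) (le_max_left _ _)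
  have hC0 : 0 ≤ C := by
    have h0 := hp 0
    norm_num at h0
    linarith [abs_nonneg (p 0)]
  apply Summable.of_norm_bounded
    (g := fun k : ℕ => (C * M) * (((k:ℝ) + 1) ^ 2 * |y| ^ k / (Nat.factorial k : ℝ)))
    (((summable_master |y| (abs_nonneg y)).mul_left (C * M)))
  intro k
  have h1 : ‖p k * bc ν k * y ^ k‖ = |p k| * bc ν k * |y| ^ k := by
    rw [norm_mul, norm_mul, Real.norm_eq_abs, Real.norm_eq_abs, Real.norm_eq_abs,
      abs_of_nonneg (bc_nonneg hν k), abs_pow]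
  rw [h1]
  have h2 : |p k| * bc ν k * |y| ^ k ≤ (C * ((k:ℝ)+1)^2) * (M / (Nat.factorial k : ℝ)) * |y| ^ k := by
    apply mul_le_mul_of_nonneg_right _ (pow_nonneg (abs_nonneg y) k)
    apply mul_le_mul (hp k) (bc_le hν k) (bc_nonneg hν k) (by positivity)
  calc |p k| * bc ν k * |y| ^ k ≤ (C * ((k:ℝ)+1)^2) * (M / (Nat.factorial k : ℝ)) * |y| ^ k := h2
    _ = (C * M) * (((k:ℝ) + 1) ^ 2 * |y| ^ k / (Nat.factorial k : ℝ)) := by ring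

noncomputable def S0 (ν x : ℝ) : ℝ := ∑' k : ℕ, bc ν k * (x/2) ^ (2*k)
noncomputable def T0 (ν x : ℝ) : ℝ := ∑' k : ℕ, (2*(k:ℝ)) * bc ν k * (x/2) ^ (2*k)
noncomputable def S1 (ν x : ℝ) : ℝ := ∑' k : ℕ, (2*(k:ℝ) + ν) * bc ν k * (x/2) ^ (2*k)
noncomputable def S2 (ν x : ℝ) : ℝ := ∑' k : ℕ, (2*(k:ℝ) + ν)^2 * bc ν k * (x/2) ^ (2*k)

lemma pow_two_mul (z : ℝ) (k : ℕ) : z ^ (2*k) = (z^2) ^ k := by rw [pow_mul]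

lemma summable_S0 {ν : ℝ} (hν : -1 ≤ ν) (x : ℝ) :
    Summable (fun k : ℕ => bc ν k * (x/2) ^ (2*k)) := by
  have := summable_bc_mul hν ((x/2)^2) (fun _ => 1) 1 (fun k => by
    show |(1:ℝ)| ≤ 1 * ((k:ℝ)+1)^2
    rw [abs_one, one_mul]
    nlinarith [(Nat.cast_nonneg k : (0:ℝ) ≤ (k:ℝ))])
  simpa [pow_two_mul, one_mul] using this

lemma summable_T0 {ν : ℝ} (hν : -1 ≤ ν) (x : ℝ) :
    Summable (fun k : ℕ => (2*(k:ℝ)) * bc ν k * (x/2) ^ (2*k)) := by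
  have := summable_bc_mul hν ((x/2)^2) (fun k => 2*(k:ℝ)) 2 (fun k => by
    show |2*(k:ℝ)| ≤ 2 * ((k:ℝ)+1)^2
    rw [abs_of_nonneg (by positivity)]
    nlinarith [(Nat.cast_nonneg k : (0:ℝ) ≤ (k:ℝ))])
  simpa [pow_two_mul] using this

lemma summable_S1 {ν : ℝ} (hν : -1 ≤ ν) (x : ℝ) :
    Summable (fun k : ℕ => (2*(k:ℝ) + ν) * bc ν k * (x/2) ^ (2*k)) := by
  have := summable_bc_mul hν ((x/2)^2) (fun k => 2*(k:ℝ) + ν) (2 + |ν|) (fun k => by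
    show |2*(k:ℝ) + ν| ≤ (2 + |ν|) * ((k:ℝ)+1)^2
    have h1 : |2*(k:ℝ) + ν| ≤ 2*(k:ℝ) + |ν| := by
      calc |2*(k:ℝ) + ν| ≤ |2*(k:ℝ)| + |ν| := abs_add_le _ _
        _ = 2*(k:ℝ) + |ν| := by rw [abs_of_nonneg (by positivity)]
    have h2 : (1:ℝ) ≤ ((k:ℝ)+1)^2 := by nlinarith [(Nat.cast_nonneg k : (0:ℝ) ≤ (k:ℝ))]
    nlinarith [abs_nonneg ν, (Nat.cast_nonneg k : (0:ℝ) ≤ (k:ℝ)), h1, h2,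
      mul_le_mul_of_nonneg_left h2 (abs_nonneg ν)])
  simpa [pow_two_mul] using this

lemma summable_S2 {ν : ℝ} (hν : -1 ≤ ν) (x : ℝ) :
    Summable (fun k : ℕ => (2*(k:ℝ) + ν)^2 * bc ν k * (x/2) ^ (2*k)) := by
  have := summable_bc_mul hν ((x/2)^2) (fun k => (2*(k:ℝ) + ν)^2) ((2 + |ν|)^2) (fun k => by
    show |(2*(k:ℝ) + ν)^2| ≤ (2 + |ν|)^2 * ((k:ℝ)+1)^2
    have h1 : |2*(k:ℝ) + ν| ≤ (2 + |ν|) * ((k:ℝ)+1) := by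
      calc |2*(k:ℝ) + ν| ≤ |2*(k:ℝ)| + |ν| := abs_add_le _ _
        _ = 2*(k:ℝ) + |ν| := by rw [abs_of_nonneg (by positivity)]
        _ ≤ (2 + |ν|) * ((k:ℝ)+1) := by
            nlinarith [abs_nonneg ν, (Nat.cast_nonneg k : (0:ℝ) ≤ (k:ℝ))]
    have h2 : |(2*(k:ℝ) + ν)^2| = |2*(k:ℝ) + ν|^2 := by rw [abs_pow]
    rw [h2]
    calc |2*(k:ℝ) + ν|^2 ≤ ((2 + |ν|) * ((k:ℝ)+1))^2 := by
          apply pow_le_pow_left₀ (abs_nonneg _) h1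
      _ = (2 + |ν|)^2 * ((k:ℝ)+1)^2 := by ring)
  simpa [pow_two_mul] using this

lemma summable_shift {ν : ℝ} (hν : -1 ≤ ν) (x : ℝ) :
    Summable (fun k : ℕ => (4*(k:ℝ)*((k:ℝ) + ν)) * bc ν k * (x/2) ^ (2*k)) := by
  have := summable_bc_mul hν ((x/2)^2) (fun k => 4*(k:ℝ)*((k:ℝ) + ν)) (4 * (1 + |ν|)) (fun k => by
    show |4*(k:ℝ)*((k:ℝ) + ν)| ≤ (4 * (1 + |ν|)) * ((k:ℝ)+1)^2
    have hk : (0:ℝ) ≤ (k:ℝ) := Nat.cast_nonneg k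
    have h1 : |4*(k:ℝ)*((k:ℝ) + ν)| ≤ 4*(k:ℝ)*((k:ℝ) + |ν|) := by
      rw [abs_mul, abs_of_nonneg (by positivity)]
      apply mul_le_mul_of_nonneg_left _ (by positivity)
      calc |(k:ℝ) + ν| ≤ |(k:ℝ)| + |ν| := abs_add_le _ _
        _ = (k:ℝ) + |ν| := by rw [abs_of_nonneg hk]
    refine le_trans h1 ?_
    have e1 : (k:ℝ) ≤ ((k:ℝ)+1)^2 := by nlinarith [hk]
    nlinarith [e1, mul_le_mul_of_nonneg_left e1 (abs_nonneg ν), hk, abs_nonneg ν])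
  simpa [pow_two_mul] using this

lemma S2_eq {ν : ℝ} (hν : -1 ≤ ν) (x : ℝ) : S2 ν x = (x^2 + ν^2) * S0 ν x := by
  have hsplit : ∀ k : ℕ, (2*(k:ℝ) + ν)^2 * bc ν k * (x/2) ^ (2*k)
      = (4*(k:ℝ)*((k:ℝ) + ν)) * bc ν k * (x/2) ^ (2*k) + ν^2 * (bc ν k * (x/2) ^ (2*k)) := by
    intro k; ring
  have h1 : S2 ν x = (∑' k : ℕ, (4*(k:ℝ)*((k:ℝ) + ν)) * bc ν k * (x/2) ^ (2*k))
      + ν^2 * S0 ν x := by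
    rw [S2, S0, ← tsum_mul_left]
    rw [← Summable.tsum_add (summable_shift hν x) ((summable_S0 hν x).mul_left (ν^2))]
    exact tsum_congr hsplit
  have h2 : (∑' k : ℕ, (4*(k:ℝ)*((k:ℝ) + ν)) * bc ν k * (x/2) ^ (2*k)) = x^2 * S0 ν x := by
    rw [Summable.tsum_eq_zero_add (summable_shift hν x)]
    simp only [Nat.cast_zero, mul_zero, zero_mul, zero_add, Nat.cast_add, Nat.cast_one]
    have hterm : ∀ k : ℕ, (4*((k:ℝ)+1)*(((k:ℝ)+1) + ν)) * bc ν (k+1) * (x/2) ^ (2*(k+1))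
        = x^2 * (bc ν k * (x/2) ^ (2*k)) := by
      intro k
      have hrec := bc_rec hν k
      have hpow : (x/2 : ℝ) ^ (2*(k+1)) = (x/2)^(2*k) * (x/2)^2 := by
        rw [show 2*(k+1) = 2*k + 2 from by omega, pow_add]
      rw [hpow]
      have : (4*((k:ℝ)+1)*(((k:ℝ)+1) + ν)) * bc ν (k+1) = 4 * bc ν k := by
        have : ((k:ℝ)+1) * (((k:ℝ)+1) + ν) * bc ν (k+1) = bc ν k := by
          have h' : ((k:ℝ)+1) + ν = (k:ℝ) + ν + 1 := by ring
          rw [h']; exact hrec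
        nlinarith [this]
      calc (4*((k:ℝ)+1)*(((k:ℝ)+1) + ν)) * bc ν (k+1) * ((x/2)^(2*k) * (x/2)^2)
          = ((4*((k:ℝ)+1)*(((k:ℝ)+1) + ν)) * bc ν (k+1)) * ((x/2)^(2*k) * (x/2)^2) := by ring
        _ = (4 * bc ν k) * ((x/2)^(2*k) * (x/2)^2) := by rw [this]
        _ = x^2 * (bc ν k * (x/2)^(2*k)) := by ring
    rw [tsum_congr hterm, tsum_mul_left, S0]
  rw [h1, h2]; ring

lemma S0_nonneg {ν : ℝ} (hν : -1 ≤ ν) (x : ℝ) : 0 ≤ S0 ν x :=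
  tsum_nonneg (fun k => mul_nonneg (bc_nonneg hν k) (by rw [pow_two_mul]; positivity))

lemma S0_pos {ν : ℝ} (hν : -1 ≤ ν) {x : ℝ} (hx : 0 < x) : 0 < S0 ν x := by
  apply Summable.tsum_pos (summable_S0 hν x)
    (fun k => mul_nonneg (bc_nonneg hν k) (by rw [pow_two_mul]; positivity)) 1
  have h1 := bc_one_pos hν
  have h2 : (0:ℝ) < (x/2) ^ (2*1) := by positivity
  exact mul_pos h1 h2

lemma cauchy_schwarz_S {ν : ℝ} (hν : -1 ≤ ν) (x : ℝ) :
    S1 ν x ^ 2 ≤ S2 ν x * S0 ν x := by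
  have hterm_nonneg : ∀ k : ℕ, 0 ≤ bc ν k * (x/2) ^ (2*k) :=
    fun k => mul_nonneg (bc_nonneg hν k) (by rw [pow_two_mul]; positivity)
  set u : ℕ → ℝ := fun k => (2*(k:ℝ) + ν) * Real.sqrt (bc ν k * (x/2) ^ (2*k)) with hu
  set v : ℕ → ℝ := fun k => Real.sqrt (bc ν k * (x/2) ^ (2*k)) with hv
  have huv : ∀ k, u k * v k = (2*(k:ℝ) + ν) * bc ν k * (x/2) ^ (2*k) := fun k => by
    rw [hu, hv]
    show (2*(k:ℝ) + ν) * Real.sqrt _ * Real.sqrt _ = _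
    rw [mul_assoc, Real.mul_self_sqrt (hterm_nonneg k), mul_assoc]
  have hu2 : ∀ k, u k ^ 2 = (2*(k:ℝ) + ν)^2 * bc ν k * (x/2) ^ (2*k) := fun k => by
    rw [hu]
    show ((2*(k:ℝ) + ν) * Real.sqrt _)^2 = _
    rw [mul_pow, Real.sq_sqrt (hterm_nonneg k), mul_assoc]
  have hv2 : ∀ k, v k ^ 2 = bc ν k * (x/2) ^ (2*k) := fun k => Real.sq_sqrt (hterm_nonneg k)
  have hS2nn : ∀ k : ℕ, (0:ℝ) ≤ (2*(k:ℝ) + ν)^2 * bc ν k * (x/2) ^ (2*k) := fun k => by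
    rw [mul_assoc]; exact mul_nonneg (sq_nonneg _) (hterm_nonneg k)
  have key : ∀ s : Finset ℕ, (∑ k ∈ s, u k * v k) ^ 2 ≤ S2 ν x * S0 ν x := by
    intro s
    have h1 := Finset.sum_mul_sq_le_sq_mul_sq s u v
    have h2 : (∑ k ∈ s, u k ^ 2) ≤ S2 ν x := by
      calc (∑ k ∈ s, u k ^ 2) = ∑ k ∈ s, (2*(k:ℝ) + ν)^2 * bc ν k * (x/2) ^ (2*k) :=
            Finset.sum_congr rfl (fun k _ => hu2 k)
        _ ≤ S2 ν x := Summable.sum_le_tsum s (fun k _ => hS2nn k) (summable_S2 hν x)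
    have h3 : (∑ k ∈ s, v k ^ 2) ≤ S0 ν x := by
      calc (∑ k ∈ s, v k ^ 2) = ∑ k ∈ s, bc ν k * (x/2) ^ (2*k) :=
            Finset.sum_congr rfl (fun k _ => hv2 k)
        _ ≤ S0 ν x := Summable.sum_le_tsum s (fun k _ => hterm_nonneg k) (summable_S0 hν x)
    have h4 : (0:ℝ) ≤ ∑ k ∈ s, v k ^ 2 := Finset.sum_nonneg (fun k _ => sq_nonneg _)
    have h5 : (0:ℝ) ≤ ∑ k ∈ s, u k ^ 2 := Finset.sum_nonneg (fun k _ => sq_nonneg _)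
    calc (∑ k ∈ s, u k * v k) ^ 2 ≤ (∑ k ∈ s, u k ^ 2) * (∑ k ∈ s, v k ^ 2) := h1
      _ ≤ S2 ν x * S0 ν x := mul_le_mul h2 h3 h4 (le_trans h5 h2)
  have h0 : Filter.Tendsto (fun s : Finset ℕ => ∑ k ∈ s, u k * v k) Filter.atTop
      (nhds (S1 ν x)) := by
    have heq : (fun s : Finset ℕ => ∑ k ∈ s, u k * v k)
        = fun s : Finset ℕ => ∑ k ∈ s, (2*(k:ℝ) + ν) * bc ν k * (x/2) ^ (2*k) :=
      funext (fun s => Finset.sum_congr rfl (fun k _ => huv k))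
    rw [heq]
    exact (summable_S1 hν x).hasSum
  have ht : Filter.Tendsto (fun s : Finset ℕ => (∑ k ∈ s, u k * v k)^2) Filter.atTop
      (nhds (S1 ν x ^ 2)) := by
    have : Filter.Tendsto (fun y : ℝ => y ^ 2) (nhds (S1 ν x)) (nhds (S1 ν x ^ 2)) :=
      ((continuous_pow 2).continuousAt (x := S1 ν x))
    exact this.comp h0
  exact le_of_tendsto' ht key

lemma S1_le {ν : ℝ} (hν : -1 ≤ ν) {x : ℝ} (hx : 0 < x) :
    S1 ν x ≤ Real.sqrt (x^2 + ν^2) * S0 ν x := by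
  have hcs := cauchy_schwarz_S hν x
  rw [S2_eq hν x] at hcs
  calc S1 ν x ≤ |S1 ν x| := le_abs_self _
    _ = Real.sqrt (S1 ν x ^ 2) := (Real.sqrt_sq_eq_abs _).symm
    _ ≤ Real.sqrt ((x^2 + ν^2) * S0 ν x ^ 2) := Real.sqrt_le_sqrt (by nlinarith [hcs])
    _ = Real.sqrt (x^2 + ν^2) * S0 ν x := by
        rw [Real.sqrt_mul (by positivity), Real.sqrt_sq (S0_nonneg hν x)]

lemma besselI_eq (ν x : ℝ) : besselI ν x = S0 ν x * (x/2) ^ ν := by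
  rw [besselI, S0, ← tsum_mul_right]
  exact tsum_congr (fun k => by rw [bc]; ring)

lemma hasDerivAt_term {ν : ℝ} (k : ℕ) {x : ℝ} (hx : x ≠ 0) :
    HasDerivAt (fun y : ℝ => bc ν k * (y/2)^(2*k))
      (bc ν k * (2*(k:ℝ)) * (x/2)^(2*k) / x) x := by
  cases k with
  | zero =>
    simp only [Nat.mul_zero, pow_zero, mul_one, Nat.cast_zero, mul_zero, zero_mul, zero_div]
    exact hasDerivAt_const x _
  | succ n =>
    have hbase : HasDerivAt (fun y : ℝ => y/2) (1/2) x := (hasDerivAt_id x).div_const 2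
    have h2 := hbase.pow (2*(n+1))
    have h3 := h2.const_mul (bc ν (n+1))
    refine HasDerivAt.congr_deriv h3 ?_
    have hexp : 2*(n+1) - 1 = 2*n + 1 := by omega
    have hexp2 : 2*(n+1) = (2*n+1) + 1 := by omega
    rw [hexp, hexp2, pow_succ]
    push_cast
    field_simp
    ring

lemma hasDerivAt_S0 {ν : ℝ} (hν : -1 ≤ ν) {x : ℝ} (hx : 0 < x) :
    HasDerivAt (S0 ν) (T0 ν x / x) x := by
  set s : Set ℝ := Set.Ioo (x/2) (x+1) with hs
  have hxs : x ∈ s := ⟨by linarith, by linarith⟩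
  set D : ℕ → ℝ → ℝ := fun k y => bc ν k * (2*(k:ℝ)) * (y/2)^(2*k) / y with hD
  have hbound : ∀ (k : ℕ) (y : ℝ), y ∈ s →
      ‖D k y‖ ≤ (2*(k:ℝ)) * bc ν k * ((x+1)/2)^(2*k) * (2/x) := by
    intro k y hy
    have hy1 : x/2 < y := hy.1
    have hy2 : y < x+1 := hy.2
    have hy0 : 0 < y := lt_trans (by linarith) hy1
    rw [hD]
    have hDnn : (0:ℝ) ≤ bc ν k * (2*(k:ℝ)) * (y/2)^(2*k) / y := by
      have := bc_nonneg hν k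
      rw [pow_two_mul]
      positivity
    rw [Real.norm_of_nonneg hDnn]
    have hp : (y/2)^(2*k) ≤ ((x+1)/2)^(2*k) := by
      rw [pow_two_mul, pow_two_mul]
      apply pow_le_pow_left₀ (by positivity)
      nlinarith
    have hinv : 1/y ≤ 2/x := by
      rw [div_le_div_iff₀ hy0 hx]
      nlinarith
    calc bc ν k * (2*(k:ℝ)) * (y/2)^(2*k) / y
        = (bc ν k * (2*(k:ℝ)) * (y/2)^(2*k)) * (1/y) := by ring
      _ ≤ (bc ν k * (2*(k:ℝ)) * (((x+1))/2)^(2*k)) * (2/x) := by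
          apply mul_le_mul
          · apply mul_le_mul_of_nonneg_left hp
            exact mul_nonneg (bc_nonneg hν k) (by positivity)
          · exact hinv
          · positivity
          · have h1 : (0:ℝ) ≤ (((x+1))/2)^(2*k) := by rw [pow_two_mul]; positivity
            exact mul_nonneg (mul_nonneg (bc_nonneg hν k) (by positivity)) h1
      _ = (2*(k:ℝ)) * bc ν k * ((x+1)/2)^(2*k) * (2/x) := by ring
  have husum : Summable (fun k : ℕ => (2*(k:ℝ)) * bc ν k * ((x+1)/2)^(2*k) * (2/x)) :=
    (summable_T0 hν (x+1)).mul_right (2/x)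
  have hunif : TendstoUniformlyOn (fun t : Finset ℕ => fun y => ∑ k ∈ t, D k y)
      (fun y => ∑' k, D k y) Filter.atTop s :=
    tendstoUniformlyOn_tsum husum hbound
  have hg' : ∀ y ∈ s, (∑' k, D k y) = T0 ν y / y := by
    intro y hy
    rw [T0, hD, tsum_div_const]
    congr 1
    exact tsum_congr (fun k => by ring)
  have hlocal : TendstoLocallyUniformlyOn (fun t : Finset ℕ => fun y => ∑ k ∈ t, D k y)
      (fun y => T0 ν y / y) Filter.atTop s := by
    apply TendstoUniformlyOn.tendstoLocallyUniformlyOn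
    exact hunif.congr_right hg'
  have hderivs : ∀ᶠ t : Finset ℕ in Filter.atTop, ∀ y ∈ s,
      HasDerivAt (fun z => ∑ k ∈ t, bc ν k * (z/2)^(2*k)) (∑ k ∈ t, D k y) y := by
    apply Filter.Eventually.of_forall
    intro t y hy
    have hy0 : y ≠ 0 := by
      have h05 : (0:ℝ) < x/2 := by linarith
      have : (0:ℝ) < y := lt_trans h05 hy.1
      exact ne_of_gt this
    exact HasDerivAt.fun_sum (fun k _ => hasDerivAt_term k hy0)
  have hptwise : ∀ y ∈ s, Filter.Tendsto
      (fun t : Finset ℕ => ∑ k ∈ t, bc ν k * (y/2)^(2*k)) Filter.atTop (nhds (S0 ν y)) :=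
    fun y _ => ((summable_S0 hν y).hasSum)
  exact hasDerivAt_of_tendstoLocallyUniformlyOn (g' := fun y => T0 ν y / y) isOpen_Ioo hlocal hderivs hptwise hxs

lemma T0_add_S0 {ν : ℝ} (hν : -1 ≤ ν) (x : ℝ) : T0 ν x + ν * S0 ν x = S1 ν x := by
  rw [T0, S0, S1, ← tsum_mul_left, ← Summable.tsum_add (summable_T0 hν x)
    ((summable_S0 hν x).mul_left ν)]
  exact tsum_congr (fun k => by ring)

lemma hasDerivAt_besselI {ν : ℝ} (hν : -1 ≤ ν) {x : ℝ} (hx : 0 < x) :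
    HasDerivAt (besselI ν)
      (T0 ν x / x * (x/2)^ν + S0 ν x * (ν * (x/2)^(ν-1) * (1/2))) x := by
  have hrw : besselI ν = fun y => S0 ν y * (y/2)^ν := funext (besselI_eq ν)
  rw [hrw]
  have h1 := hasDerivAt_S0 hν hx
  have hbase : HasDerivAt (fun y : ℝ => y/2) (1/2) x := (hasDerivAt_id x).div_const 2
  have h2 : HasDerivAt (fun y : ℝ => (y/2)^ν) (ν * (x/2)^(ν-1) * (1/2)) x := by
    have h := (Real.hasDerivAt_rpow_const (x := x/2) (p := ν)
      (Or.inl (by positivity))).comp x hbase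
    exact h
  exact h1.mul h2

lemma xI'_le {ν : ℝ} (hν : -1 ≤ ν) {x : ℝ} (hx : 0 < x) :
    x * (T0 ν x / x * (x/2)^ν + S0 ν x * (ν * (x/2)^(ν-1) * (1/2)))
      ≤ Real.sqrt (x^2 + ν^2) * besselI ν x := by
  have hx2 : (0:ℝ) < x/2 := by linarith
  have hrpow : (x/2)^(ν-1) = (x/2)^ν / (x/2) := Real.rpow_sub_one (ne_of_gt hx2) ν
  have hkey : x * (T0 ν x / x * (x/2)^ν + S0 ν x * (ν * (x/2)^(ν-1) * (1/2)))
      = S1 ν x * (x/2)^ν := by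
    rw [hrpow, ← T0_add_S0 hν x]
    field_simp
  rw [hkey, besselI_eq]
  have h1 := S1_le hν hx
  have h2 : (0:ℝ) ≤ (x/2)^ν := Real.rpow_nonneg (by positivity) ν
  calc S1 ν x * (x/2)^ν ≤ (Real.sqrt (x^2 + ν^2) * S0 ν x) * (x/2)^ν :=
        mul_le_mul_of_nonneg_right h1 h2
    _ = Real.sqrt (x^2 + ν^2) * (S0 ν x * (x/2)^ν) := by ring

lemma besselI_pos {ν : ℝ} (hν : -1 ≤ ν) {x : ℝ} (hx : 0 < x) : 0 < besselI ν x := by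
  rw [besselI_eq]
  exact mul_pos (S0_pos hν hx) (Real.rpow_pos_of_pos (by positivity) ν)

lemma key_ineq {x C : ℝ} (hx : 0 < x) (hC : 0 ≤ C) {t : ℝ}
    (ht : max 1 (Real.sqrt (54*(C+1)/x)) ≤ t) : -x * Real.cosh t + C*t ≤ -t := by
  have ht1 : (1:ℝ) ≤ t := le_trans (le_max_left _ _) ht
  have ht0 : (0:ℝ) < t := by linarith
  have hexp3 : Real.exp t = (Real.exp (t/3))^3 := by
    rw [← Real.exp_nat_mul]
    norm_num
    ring_nf
  have hcube : (t/3)^3 ≤ Real.exp t := by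
    rw [hexp3]
    apply pow_le_pow_left₀ (by positivity)
    linarith [Real.add_one_le_exp (t/3)]
  have hch : Real.exp t / 2 ≤ Real.cosh t := by
    rw [Real.cosh_eq]
    nlinarith [Real.exp_pos (-t)]
  have hc1 : t^3/27 ≤ Real.exp t := by
    calc t^3/27 = (t/3)^3 := by ring
      _ ≤ Real.exp t := hcube
  have ht2 : 54*(C+1)/x ≤ t^2 := by
    have h0 : (0:ℝ) ≤ 54*(C+1)/x := by positivity
    have hss := Real.sq_sqrt h0
    have hsq : Real.sqrt (54*(C+1)/x) ≤ t := le_trans (le_max_right _ _) ht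
    nlinarith [Real.sqrt_nonneg (54*(C+1)/x)]
  have hxt2 : 54*(C+1) ≤ x*t^2 := by
    rw [div_le_iff₀ hx] at ht2
    linarith
  have hxch : (C+1)*t ≤ x * Real.cosh t := by
    have h1 : x * (t^3/54) ≤ x * Real.cosh t := by
      apply mul_le_mul_of_nonneg_left _ hx.le
      linarith
    have h2 : (C+1)*t ≤ x * (t^3/54) := by nlinarith
    linarith
  linarith

lemma integrable_master {x C : ℝ} (hx : 0 < x) (hC : 0 ≤ C) :
    IntegrableOn (fun t => Real.exp (-x * Real.cosh t + C*t)) (Set.Ioi 0) := by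
  set T := max 1 (Real.sqrt (54*(C+1)/x)) with hT
  have hT0 : (0:ℝ) ≤ T := le_trans zero_le_one (le_max_left _ _)
  have hcont : Continuous (fun t => Real.exp (-x * Real.cosh t + C*t)) := by
    apply Real.continuous_exp.comp
    continuity
  rw [← Set.Ioc_union_Ioi_eq_Ioi hT0]
  apply MeasureTheory.IntegrableOn.union
  · exact hcont.integrableOn_Ioc
  · apply MeasureTheory.Integrable.mono (exp_neg_integrableOn_Ioi T one_pos)
      (hcont.aestronglyMeasurable.restrict)
    filter_upwards [MeasureTheory.ae_restrict_mem measurableSet_Ioi] with t ht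
    have h1 : -x * Real.cosh t + C*t ≤ -t := key_ineq hx hC (le_of_lt ht)
    rw [Real.norm_eq_abs, Real.norm_eq_abs, Real.abs_exp, Real.abs_exp]
    apply Real.exp_le_exp.2
    linarith

lemma cosh_le_exp_abs (y : ℝ) : Real.cosh y ≤ Real.exp |y| := by
  rw [Real.cosh_eq]
  have h1 : Real.exp y ≤ Real.exp |y| := Real.exp_le_exp.2 (le_abs_self y)
  have h2 : Real.exp (-y) ≤ Real.exp |y| := Real.exp_le_exp.2 (neg_le_abs y)
  linarith

lemma abs_sinh_le_cosh (y : ℝ) : |Real.sinh y| ≤ Real.cosh y := by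
  rw [abs_le]
  constructor
  · have := Real.sinh_lt_cosh (-y)
    rw [Real.sinh_neg, Real.cosh_neg] at this
    linarith
  · exact (Real.sinh_lt_cosh y).le

lemma cosh_mul_le {ν t : ℝ} (ht : 0 ≤ t) : Real.cosh (ν*t) ≤ Real.exp (|ν| * t) := by
  calc Real.cosh (ν*t) ≤ Real.exp |ν*t| := cosh_le_exp_abs _
    _ = Real.exp (|ν| * t) := by rw [abs_mul, abs_of_nonneg ht]

lemma cosh_le_exp {t : ℝ} (ht : 0 ≤ t) : Real.cosh t ≤ Real.exp t := by
  calc Real.cosh t ≤ Real.exp |t| := cosh_le_exp_abs t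
    _ = Real.exp t := by rw [abs_of_nonneg ht]

lemma integrable_w {ν x : ℝ} (hx : 0 < x) :
    IntegrableOn (fun t => Real.exp (-x * Real.cosh t) * Real.cosh (ν*t)) (Set.Ioi 0) := by
  apply MeasureTheory.Integrable.mono (integrable_master hx (abs_nonneg ν))
    ((Continuous.aestronglyMeasurable (by continuity)).restrict)
  filter_upwards [MeasureTheory.ae_restrict_mem measurableSet_Ioi] with t ht
  rw [Real.norm_eq_abs, Real.norm_eq_abs, Real.abs_exp, abs_mul, Real.abs_exp,
    abs_of_nonneg (Real.cosh_pos (ν*t)).le, Real.exp_add]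
  exact mul_le_mul_of_nonneg_left (cosh_mul_le (le_of_lt ht)) (Real.exp_pos _).le

lemma integrable_chw {ν x : ℝ} (hx : 0 < x) :
    IntegrableOn (fun t => Real.cosh t * (Real.exp (-x * Real.cosh t) * Real.cosh (ν*t)))
      (Set.Ioi 0) := by
  apply MeasureTheory.Integrable.mono (integrable_master hx (by positivity : (0:ℝ) ≤ |ν| + 1))
    ((Continuous.aestronglyMeasurable (by continuity)).restrict)
  filter_upwards [MeasureTheory.ae_restrict_mem measurableSet_Ioi] with t ht
  have ht0 : (0:ℝ) ≤ t := le_of_lt ht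
  rw [Real.norm_eq_abs, Real.norm_eq_abs, Real.abs_exp, abs_mul, abs_mul, Real.abs_exp,
    abs_of_nonneg (Real.cosh_pos (ν*t)).le, abs_of_nonneg (Real.cosh_pos t).le]
  have h1 : Real.exp (-x * Real.cosh t + (|ν| + 1) * t)
      = Real.exp t * (Real.exp (-x * Real.cosh t) * Real.exp (|ν| * t)) := by
    rw [← Real.exp_add, ← Real.exp_add]
    congr 1
    ring
  rw [h1]
  apply mul_le_mul (cosh_le_exp ht0)
  · exact mul_le_mul_of_nonneg_left (cosh_mul_le ht0) (Real.exp_pos _).le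
  · positivity
  · positivity

lemma integrable_shw {ν x : ℝ} (hx : 0 < x) :
    IntegrableOn (fun t => Real.sinh t * (Real.exp (-x * Real.cosh t) * Real.cosh (ν*t)))
      (Set.Ioi 0) := by
  apply MeasureTheory.Integrable.mono (integrable_chw hx (ν := ν))
    ((Continuous.aestronglyMeasurable (by continuity)).restrict)
  filter_upwards [MeasureTheory.ae_restrict_mem measurableSet_Ioi] with t ht
  rw [Real.norm_eq_abs, Real.norm_eq_abs]
  simp only [abs_mul]
  apply mul_le_mul_of_nonneg_right _ (mul_nonneg (abs_nonneg _) (abs_nonneg _))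
  calc |Real.sinh t| ≤ Real.cosh t := abs_sinh_le_cosh t
    _ = |Real.cosh t| := (abs_of_nonneg (Real.cosh_pos _).le).symm

lemma integrable_shsh {ν x : ℝ} (hx : 0 < x) :
    IntegrableOn (fun t => Real.sinh t * Real.sinh (ν*t) * Real.exp (-x * Real.cosh t))
      (Set.Ioi 0) := by
  apply MeasureTheory.Integrable.mono (integrable_chw hx (ν := ν))
    ((Continuous.aestronglyMeasurable (by continuity)).restrict)
  filter_upwards [MeasureTheory.ae_restrict_mem measurableSet_Ioi] with t ht
  rw [Real.norm_eq_abs, Real.norm_eq_abs]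
  simp only [abs_mul, Real.abs_exp]
  have h1 : |Real.sinh t| * |Real.sinh (ν*t)| ≤ |Real.cosh t| * |Real.cosh (ν*t)| := by
    apply mul_le_mul
    · calc |Real.sinh t| ≤ Real.cosh t := abs_sinh_le_cosh t
        _ = |Real.cosh t| := (abs_of_nonneg (Real.cosh_pos _).le).symm
    · calc |Real.sinh (ν*t)| ≤ Real.cosh (ν*t) := abs_sinh_le_cosh _
        _ = |Real.cosh (ν*t)| := (abs_of_nonneg (Real.cosh_pos _).le).symm
    · exact abs_nonneg _
    · exact abs_nonneg _
  calc |Real.sinh t| * |Real.sinh (ν*t)| * Real.exp (-x * Real.cosh t)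
      ≤ (|Real.cosh t| * |Real.cosh (ν*t)|) * Real.exp (-x * Real.cosh t) :=
        mul_le_mul_of_nonneg_right h1 (Real.exp_pos _).le
    _ = |Real.cosh t| * (Real.exp (-x * Real.cosh t) * |Real.cosh (ν*t)|) := by ring

lemma besselK_pos {ν x : ℝ} (hx : 0 < x) : 0 < besselK ν x := by
  rw [besselK]
  have hpos : ∀ t : ℝ, 0 < Real.exp (-x * Real.cosh t) * Real.cosh (ν*t) :=
    fun t => mul_pos (Real.exp_pos _) (Real.cosh_pos _)
  rw [show (fun t => Real.exp (-x * Real.cosh t) * Real.cosh (ν * t))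
    = fun t => Real.exp (-x * Real.cosh t) * Real.cosh (ν * t) from rfl]
  have hiff := MeasureTheory.integral_pos_iff_support_of_nonneg_ae
    (μ := MeasureTheory.volume.restrict (Set.Ioi 0))
    (f := fun t => Real.exp (-x * Real.cosh t) * Real.cosh (ν*t))
    (Filter.Eventually.of_forall (fun t => (hpos t).le)) (integrable_w hx)
  apply hiff.2
  have hsupp : Function.support (fun t => Real.exp (-x * Real.cosh t) * Real.cosh (ν*t))
      = Set.univ := Set.eq_univ_of_forall (fun t => ne_of_gt (hpos t))
  rw [hsupp]
  simp [Real.volume_Ioi]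

lemma hasDerivAt_besselK {ν x : ℝ} (hx : 0 < x) :
    HasDerivAt (besselK ν)
      (-∫ t in Set.Ioi (0:ℝ), Real.cosh t * (Real.exp (-x * Real.cosh t) * Real.cosh (ν*t))) x := by
  have hmain := hasDerivAt_integral_of_dominated_loc_of_deriv_le
    (μ := MeasureTheory.volume.restrict (Set.Ioi (0:ℝ)))
    (F := fun y t => Real.exp (-y * Real.cosh t) * Real.cosh (ν*t))
    (F' := fun y t => -(Real.cosh t * (Real.exp (-y * Real.cosh t) * Real.cosh (ν*t))))
    (x₀ := x)
    (bound := fun t => Real.cosh t * (Real.exp (-(x/2) * Real.cosh t) * Real.exp (|ν| * t)))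
    (s := Metric.ball x (x/2)) (Metric.ball_mem_nhds x (by positivity))
    (Filter.Eventually.of_forall (fun y =>
      (Continuous.aestronglyMeasurable (by continuity)).restrict))
    (integrable_w hx)
    ((Continuous.aestronglyMeasurable (by continuity)).restrict)
    ?_ ?_ ?_
  · have heq : besselK ν = fun y => ∫ t in Set.Ioi (0:ℝ),
        Real.exp (-y * Real.cosh t) * Real.cosh (ν*t) := by
      funext y; rfl
    rw [heq]
    exact hmain.2.congr_deriv (by rw [← MeasureTheory.integral_neg])
  · -- bound
    filter_upwards [MeasureTheory.ae_restrict_mem measurableSet_Ioi] with t ht y hy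
    have ht0 : (0:ℝ) ≤ t := le_of_lt ht
    have hy' : |y - x| < x/2 := by rwa [Metric.mem_ball, Real.dist_eq] at hy
    have hy2 : x/2 < y := by
      rcases abs_lt.1 hy' with ⟨h1, h2⟩
      linarith
    rw [norm_neg, Real.norm_eq_abs, abs_of_nonneg (by positivity)]
    apply mul_le_mul_of_nonneg_left _ (Real.cosh_pos t).le
    apply mul_le_mul
    · apply Real.exp_le_exp.2
      have hcp := Real.cosh_pos t
      nlinarith
    · exact cosh_mul_le ht0
    · exact (Real.cosh_pos _).le
    · exact (Real.exp_pos _).le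
  · -- bound integrable
    apply MeasureTheory.Integrable.mono
      (integrable_master (by positivity : (0:ℝ) < x/2) (by positivity : (0:ℝ) ≤ |ν| + 1))
      ((Continuous.aestronglyMeasurable (by continuity)).restrict)
    filter_upwards [MeasureTheory.ae_restrict_mem measurableSet_Ioi] with t ht
    have ht0 : (0:ℝ) ≤ t := le_of_lt ht
    rw [Real.norm_eq_abs, Real.norm_eq_abs, Real.abs_exp,
      abs_of_nonneg (by positivity : (0:ℝ) ≤ Real.cosh t * (Real.exp (-(x/2) * Real.cosh t) * Real.exp (|ν| * t)))]
    have h1 : Real.exp (-(x/2) * Real.cosh t + (|ν| + 1) * t)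
        = Real.exp t * (Real.exp (-(x/2) * Real.cosh t) * Real.exp (|ν| * t)) := by
      rw [← Real.exp_add, ← Real.exp_add]
      congr 1
      ring
    rw [h1]
    apply mul_le_mul_of_nonneg_right (cosh_le_exp ht0) (by positivity)
  · -- differentiability
    apply Filter.Eventually.of_forall
    intro t y hy
    have h1 : HasDerivAt (fun y : ℝ => -y * Real.cosh t) (-Real.cosh t) y := by
      simpa using ((hasDerivAt_id y).neg.mul_const (Real.cosh t))
    have h2 := (h1.exp).mul_const (Real.cosh (ν*t))
    exact h2.congr_deriv (by ring)

lemma ibp_identity {ν x : ℝ} (hx : 0 < x) :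
    x * ∫ t in Set.Ioi (0:ℝ), Real.sinh t * Real.sinh (ν*t) * Real.exp (-x * Real.cosh t)
      = ν * besselK ν x := by
  set F : ℝ → ℝ := fun t => Real.exp (-x * Real.cosh t) * Real.sinh (ν*t) with hF
  set G : ℝ → ℝ := fun t => ν * (Real.exp (-x * Real.cosh t) * Real.cosh (ν*t))
      - x * (Real.sinh t * Real.sinh (ν*t) * Real.exp (-x * Real.cosh t)) with hG
  have hderiv : ∀ t : ℝ, HasDerivAt F (G t) t := by
    intro t
    have h1 : HasDerivAt (fun u : ℝ => -x * Real.cosh u) (-x * Real.sinh t) t :=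
      (Real.hasDerivAt_cosh t).const_mul (-x)
    have h2 := h1.exp
    have h3 : HasDerivAt (fun u : ℝ => Real.sinh (ν*u)) (Real.cosh (ν*t) * ν) t := by
      have hid : HasDerivAt (fun u : ℝ => ν*u) ν t := by
        simpa using (hasDerivAt_id t).const_mul ν
      exact hid.sinh
    have h4 := h2.mul h3
    exact h4.congr_deriv (by rw [hG]; ring)
  have hcont : ContinuousWithinAt F (Set.Ici 0) 0 := (hderiv 0).continuousAt.continuousWithinAt
  have hint : IntegrableOn G (Set.Ioi 0) :=
    ((integrable_w hx).const_mul ν).sub ((integrable_shsh hx).const_mul x)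
  have htend : Filter.Tendsto F Filter.atTop (nhds 0) := by
    apply squeeze_zero_norm' _ tendsto_exp_neg_atTop_nhds_zero
    filter_upwards [Filter.eventually_ge_atTop (max 1 (Real.sqrt (54*(|ν|+1)/x)))] with t ht
    have ht0 : (0:ℝ) ≤ t := le_trans (le_trans zero_le_one (le_max_left _ _)) ht
    have hk := key_ineq hx (abs_nonneg ν) ht
    rw [hF]
    show ‖Real.exp (-x * Real.cosh t) * Real.sinh (ν*t)‖ ≤ Real.exp (-t)
    rw [Real.norm_eq_abs, abs_mul, Real.abs_exp]
    calc Real.exp (-x * Real.cosh t) * |Real.sinh (ν*t)|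
        ≤ Real.exp (-x * Real.cosh t) * Real.exp (|ν| * t) := by
          apply mul_le_mul_of_nonneg_left _ (Real.exp_pos _).le
          exact le_trans (abs_sinh_le_cosh _) (cosh_mul_le ht0)
      _ = Real.exp (-x * Real.cosh t + |ν| * t) := by rw [← Real.exp_add]
      _ ≤ Real.exp (-t) := Real.exp_le_exp.2 hk
  have hibp := MeasureTheory.integral_Ioi_of_hasDerivAt_of_tendsto hcont
    (fun t _ => hderiv t) hint htend
  have hF0 : F 0 = 0 := by rw [hF]; simp
  rw [hF0, sub_zero] at hibp
  rw [hG] at hibp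
  rw [MeasureTheory.integral_sub ((integrable_w hx).const_mul ν)
    ((integrable_shsh hx).const_mul x)] at hibp
  rw [MeasureTheory.integral_const_mul, MeasureTheory.integral_const_mul] at hibp
  have : ν * besselK ν x = ν * ∫ t in Set.Ioi (0:ℝ),
      Real.exp (-x * Real.cosh t) * Real.cosh (ν*t) := by rw [besselK]
  rw [this]
  linarith [hibp]

lemma tangent_sq {s : ℝ} (t : ℝ) :
    (Real.sqrt (1 + s^2) * Real.cosh t)^2 - (1 + s*Real.sinh t)^2 = (s - Real.sinh t)^2 := by
  rw [mul_pow, Real.sq_sqrt (by positivity : (0:ℝ) ≤ 1 + s^2), Real.cosh_sq']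
  ring

lemma tangent_le {s : ℝ} (hs : 0 ≤ s) (t : ℝ) :
    1 + s * Real.sinh t ≤ Real.sqrt (1 + s^2) * Real.cosh t := by
  have hr0 : 0 < Real.sqrt (1 + s^2) := Real.sqrt_pos.2 (by positivity)
  have hc := Real.cosh_pos t
  have key := tangent_sq (s := s) t
  rcases le_or_gt (1 + s * Real.sinh t) 0 with h | h
  · nlinarith [mul_pos hr0 hc]
  · have hsq : (1 + s*Real.sinh t)^2 ≤ (Real.sqrt (1 + s^2) * Real.cosh t)^2 := by
      nlinarith [sq_nonneg (s - Real.sinh t)]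
    calc 1 + s * Real.sinh t = Real.sqrt ((1 + s*Real.sinh t)^2) := (Real.sqrt_sq h.le).symm
      _ ≤ Real.sqrt ((Real.sqrt (1 + s^2) * Real.cosh t)^2) := Real.sqrt_le_sqrt hsq
      _ = Real.sqrt (1 + s^2) * Real.cosh t := Real.sqrt_sq (by positivity)

lemma tangent_lt {s : ℝ} (hs : 0 ≤ s) {t : ℝ} (hne : Real.sinh t ≠ s) :
    1 + s * Real.sinh t < Real.sqrt (1 + s^2) * Real.cosh t := by
  have hr0 : 0 < Real.sqrt (1 + s^2) := Real.sqrt_pos.2 (by positivity)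
  have hc := Real.cosh_pos t
  have key := tangent_sq (s := s) t
  have hd : 0 < (s - Real.sinh t)^2 := by
    have hne2 : s - Real.sinh t ≠ 0 := sub_ne_zero.2 (fun h => hne h.symm)
    exact sq_pos_of_ne_zero hne2
  rcases le_or_gt (1 + s * Real.sinh t) 0 with h | h
  · nlinarith [mul_pos hr0 hc]
  · have hsq : (1 + s*Real.sinh t)^2 < (Real.sqrt (1 + s^2) * Real.cosh t)^2 := by nlinarith
    calc 1 + s * Real.sinh t = Real.sqrt ((1 + s*Real.sinh t)^2) := (Real.sqrt_sq h.le).symm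
      _ < Real.sqrt ((Real.sqrt (1 + s^2) * Real.cosh t)^2) := by
          apply Real.sqrt_lt_sqrt (sq_nonneg _) hsq
      _ = Real.sqrt (1 + s^2) * Real.cosh t := Real.sqrt_sq (by positivity)

lemma Js_ge {ν x : ℝ} (hx : 0 < x) :
    |ν| * besselK ν x ≤
      x * ∫ t in Set.Ioi (0:ℝ), Real.sinh t * (Real.exp (-x * Real.cosh t) * Real.cosh (ν*t)) := by
  have hid := ibp_identity (ν := ν) hx
  have hK := besselK_pos (ν := ν) hx
  have h1 : |ν| * besselK ν x
      = |x * ∫ t in Set.Ioi (0:ℝ), Real.sinh t * Real.sinh (ν*t) * Real.exp (-x * Real.cosh t)| := by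
    rw [hid, abs_mul, abs_of_pos hK]
  rw [h1, abs_mul, abs_of_pos hx]
  apply mul_le_mul_of_nonneg_left _ hx.le
  calc |∫ t in Set.Ioi (0:ℝ), Real.sinh t * Real.sinh (ν*t) * Real.exp (-x * Real.cosh t)|
      ≤ ∫ t in Set.Ioi (0:ℝ), ‖Real.sinh t * Real.sinh (ν*t) * Real.exp (-x * Real.cosh t)‖ := by
        rw [← Real.norm_eq_abs]
        exact MeasureTheory.norm_integral_le_integral_norm _
    _ ≤ ∫ t in Set.Ioi (0:ℝ), Real.sinh t * (Real.exp (-x * Real.cosh t) * Real.cosh (ν*t)) := by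
        apply MeasureTheory.integral_mono_ae ((integrable_shsh hx).norm) (integrable_shw hx)
        filter_upwards [MeasureTheory.ae_restrict_mem measurableSet_Ioi] with t ht
        have hsh : 0 ≤ Real.sinh t := Real.sinh_nonneg_iff.2 (le_of_lt ht)
        show ‖Real.sinh t * Real.sinh (ν*t) * Real.exp (-x * Real.cosh t)‖
          ≤ Real.sinh t * (Real.exp (-x * Real.cosh t) * Real.cosh (ν*t))
        rw [Real.norm_eq_abs, abs_mul, abs_mul, Real.abs_exp, abs_of_nonneg hsh]
        calc Real.sinh t * |Real.sinh (ν*t)| * Real.exp (-x * Real.cosh t)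
            ≤ Real.sinh t * Real.cosh (ν*t) * Real.exp (-x * Real.cosh t) := by
              apply mul_le_mul_of_nonneg_right _ (Real.exp_pos _).le
              exact mul_le_mul_of_nonneg_left (abs_sinh_le_cosh _) hsh
          _ = Real.sinh t * (Real.exp (-x * Real.cosh t) * Real.cosh (ν*t)) := by ring

lemma xK'_gt {ν x : ℝ} (hx : 0 < x) :
    Real.sqrt (x^2 + ν^2) * besselK ν x
      < x * ∫ t in Set.Ioi (0:ℝ), Real.cosh t * (Real.exp (-x * Real.cosh t) * Real.cosh (ν*t)) := by
  set s : ℝ := |ν| / x with hs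
  have hs0 : 0 ≤ s := by positivity
  set w : ℝ → ℝ := fun t => Real.exp (-x * Real.cosh t) * Real.cosh (ν*t) with hw
  have hwpos : ∀ t, 0 < w t := fun t => mul_pos (Real.exp_pos _) (Real.cosh_pos _)
  set φ : ℝ → ℝ := fun t => (Real.sqrt (1 + s^2) * Real.cosh t - (1 + s * Real.sinh t)) * w t
    with hφ
  have hφeq : φ = fun t => Real.sqrt (1 + s^2) * (Real.cosh t * w t)
      - (w t + s * (Real.sinh t * w t)) := by
    funext t; rw [hφ]; ring
  have hφint : IntegrableOn φ (Set.Ioi 0) := by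
    rw [hφeq]
    exact (((integrable_chw hx).const_mul _)).sub
      ((integrable_w hx).add ((integrable_shw hx).const_mul s))
  have hφnn : ∀ t, 0 ≤ φ t := fun t =>
    mul_nonneg (by linarith [tangent_le hs0 t]) (hwpos t).le
  have hφpos : 0 < ∫ t in Set.Ioi (0:ℝ), φ t := by
    apply (MeasureTheory.integral_pos_iff_support_of_nonneg_ae
      (Filter.Eventually.of_forall hφnn) hφint).2
    set M : ℝ := Real.arsinh s + 1 with hM
    have hM0 : 0 < M := by
      have := Real.arsinh_nonneg_iff.2 hs0
      linarith
    have hsub : Set.Ioi M ⊆ Function.support φ := by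
      intro t ht
      have htM : M < t := ht
      have hst : s < Real.sinh t := by
        have : Real.arsinh s < t := by linarith
        calc s = Real.sinh (Real.arsinh s) := (Real.sinh_arsinh s).symm
          _ < Real.sinh t := Real.sinh_lt_sinh.2 this
      have hbr : 0 < Real.sqrt (1 + s^2) * Real.cosh t - (1 + s * Real.sinh t) := by
        linarith [tangent_lt hs0 (ne_of_gt hst)]
      exact ne_of_gt (mul_pos hbr (hwpos t))
    have hmeas : MeasureTheory.volume.restrict (Set.Ioi (0:ℝ)) (Set.Ioi M) = ⊤ := by
      have hss : Set.Ioi M ⊆ Set.Ioi (0:ℝ) := Set.Ioi_subset_Ioi hM0.le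
      rw [MeasureTheory.Measure.restrict_apply' measurableSet_Ioi,
        Set.inter_eq_self_of_subset_left hss, Real.volume_Ioi]
    calc (0:ENNReal) < ⊤ := by simp
      _ = MeasureTheory.volume.restrict (Set.Ioi (0:ℝ)) (Set.Ioi M) := hmeas.symm
      _ ≤ MeasureTheory.volume.restrict (Set.Ioi (0:ℝ)) (Function.support φ) :=
          MeasureTheory.measure_mono hsub
  have hexp : (∫ t in Set.Ioi (0:ℝ), φ t)
      = Real.sqrt (1 + s^2) * (∫ t in Set.Ioi (0:ℝ), Real.cosh t * w t)
        - ((∫ t in Set.Ioi (0:ℝ), w t) + s * ∫ t in Set.Ioi (0:ℝ), Real.sinh t * w t) := by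
    have i1 : MeasureTheory.IntegrableOn
        (fun t => Real.sqrt (1 + s^2) * (Real.cosh t * w t)) (Set.Ioi 0) :=
      (integrable_chw hx).const_mul _
    have i2 : MeasureTheory.IntegrableOn
        (fun t => w t + s * (Real.sinh t * w t)) (Set.Ioi 0) :=
      (integrable_w hx).add ((integrable_shw hx).const_mul s)
    simp only [hφeq]
    rw [MeasureTheory.integral_sub i1 i2,
      MeasureTheory.integral_add (integrable_w hx) ((integrable_shw hx).const_mul s),
      MeasureTheory.integral_const_mul, MeasureTheory.integral_const_mul]
  have hKeq : besselK ν x = ∫ t in Set.Ioi (0:ℝ), w t := by rw [besselK]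
  set J : ℝ := ∫ t in Set.Ioi (0:ℝ), w t with hJ
  set Jc : ℝ := ∫ t in Set.Ioi (0:ℝ), Real.cosh t * w t with hJc
  set Js : ℝ := ∫ t in Set.Ioi (0:ℝ), Real.sinh t * w t with hJs
  have hstep1 : J + s * Js < Real.sqrt (1 + s^2) * Jc := by
    have := hφpos
    rw [hexp] at this
    linarith
  have hJpos : 0 < J := by rw [← hKeq]; exact besselK_pos hx
  have hJsge : s * J ≤ Js := by
    have h1 := Js_ge (ν := ν) hx
    rw [hKeq] at h1
    rw [hs, div_mul_eq_mul_div, div_le_iff₀ hx]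
    calc |ν| * J ≤ x * Js := h1
      _ = Js * x := by ring
  have hstep2 : (1 + s^2) * J < Real.sqrt (1 + s^2) * Jc := by
    have h2 : s * (s * J) ≤ s * Js := mul_le_mul_of_nonneg_left hJsge hs0
    nlinarith [hstep1, h2]
  have hr0 : 0 < Real.sqrt (1 + s^2) := Real.sqrt_pos.2 (by positivity)
  have hru : Real.sqrt (1 + s^2) * Real.sqrt (1 + s^2) = 1 + s^2 :=
    Real.mul_self_sqrt (by positivity)
  have hstep3 : Real.sqrt (1 + s^2) * J < Jc := by nlinarith [hstep2, hr0, hru]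
  have hxs : x * Real.sqrt (1 + s^2) = Real.sqrt (x^2 + ν^2) := by
    rw [hs]
    have h1 : x^2 + ν^2 = x^2 * (1 + (|ν|/x)^2) := by
      rw [div_pow, sq_abs]
      field_simp
    rw [h1, Real.sqrt_mul (sq_nonneg x), Real.sqrt_sq hx.le]
  calc Real.sqrt (x^2 + ν^2) * besselK ν x = x * Real.sqrt (1 + s^2) * J := by
        rw [hxs, hKeq]
    _ = x * (Real.sqrt (1 + s^2) * J) := by ring
    _ < x * Jc := mul_lt_mul_of_pos_left hstep3 hx


theorem besselI_mul_besselK_strictAntiOn (ν : ℝ) (hν : -1 ≤ ν) :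
    StrictAntiOn (fun x : ℝ => besselI ν x * besselK ν x) (Set.Ioi 0) := by
  apply strictAntiOn_of_deriv_neg (convex_Ioi 0)
  · intro x hx
    exact ((hasDerivAt_besselI hν hx).mul (hasDerivAt_besselK hx)).continuousAt.continuousWithinAt
  · intro x hx
    rw [interior_Ioi] at hx
    have hxpos : (0:ℝ) < x := hx
    have hI := hasDerivAt_besselI hν hxpos
    have hK := hasDerivAt_besselK (ν := ν) hxpos
    have hf := hI.fun_mul hK
    rw [hf.deriv]
    set A : ℝ := T0 ν x / x * (x/2)^ν + S0 ν x * (ν * (x/2)^(ν-1) * (1/2)) with hA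
    set Jc : ℝ := ∫ t in Set.Ioi (0:ℝ),
      Real.cosh t * (Real.exp (-x * Real.cosh t) * Real.cosh (ν*t)) with hJc
    have h1 : x * A ≤ Real.sqrt (x^2 + ν^2) * besselI ν x := xI'_le hν hxpos
    have h2 : Real.sqrt (x^2 + ν^2) * besselK ν x < x * Jc := xK'_gt hxpos
    have hIp : 0 < besselI ν x := besselI_pos hν hxpos
    have hKp : 0 < besselK ν x := besselK_pos hxpos
    have hkey : x * (A * besselK ν x + besselI ν x * (-Jc)) < 0 := by
      have e1 : (x * A) * besselK ν x ≤ (Real.sqrt (x^2 + ν^2) * besselI ν x) * besselK ν x :=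
        mul_le_mul_of_nonneg_right h1 hKp.le
      have e2 : besselI ν x * (Real.sqrt (x^2 + ν^2) * besselK ν x) < besselI ν x * (x * Jc) :=
        mul_lt_mul_of_pos_left h2 hIp
      nlinarith [e1, e2]
    nlinarith [hkey, hxpos, mul_pos hxpos hxpos]
end

section
/- Let ν ≠ 0 be real and x ≠ 0. Then the cubic polynomial f(λ) = λ³ + λ² − (ν² + x²)λ − ν² has three distinct real roots λ_K < λ_O < λ_I satisfying λ_K < −|ν|, −|ν| < λ_O < 0, and λ_I > |ν|. -/
open Real

/-! With `a = |ν|` and `c = ν² + x² > a²`, the cubic `f t = t³ + t² - c t - a²` satisfies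
`f (-a) = a (c - a²) > 0`, `f 0 = -a² < 0` and `f a = -a (c - a²) < 0`, while `f` is negative at
`-(1 + c)` and positive at `1 + c`. The intermediate value theorem gives one root in each of the
intervals `(-(1 + c), -a)`, `(-a, 0)` and `(a, 1 + c)`, and a monic cubic with three distinct roots
factors as the product of the corresponding linear factors, so it has no further root. -/

section CubicFactorization

variable {R : Type*} [CommRing R] [IsDomain R] {b c d r s t : R}

theorem cubic_eq_mul_of_roots (hrs : r ≠ s) (hrt : r ≠ t) (hst : s ≠ t)
    (hr : r ^ 3 + b * r ^ 2 + c * r + d = 0) (hs : s ^ 3 + b * s ^ 2 + c * s + d = 0)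
    (ht : t ^ 3 + b * t ^ 2 + c * t + d = 0) (l : R) :
    l ^ 3 + b * l ^ 2 + c * l + d = (l - r) * (l - s) * (l - t) := by
  have hrs' : r ^ 2 + r * s + s ^ 2 + b * (r + s) + c = 0 :=
    mul_left_cancel₀ (sub_ne_zero.mpr hrs) (by linear_combination hr - hs)
  have hrt' : r ^ 2 + r * t + t ^ 2 + b * (r + t) + c = 0 :=
    mul_left_cancel₀ (sub_ne_zero.mpr hrt) (by linear_combination hr - ht)
  have e₁ : r + s + t + b = 0 :=
    mul_left_cancel₀ (sub_ne_zero.mpr hst) (by linear_combination hrs' - hrt')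
  have e₂ : r * s + r * t + s * t - c = 0 := by linear_combination (r + s) * e₁ - hrs'
  have e₃ : r * s * t + d = 0 := by linear_combination hr + r * e₂ - r ^ 2 * e₁
  linear_combination l ^ 2 * e₁ - l * e₂ + e₃

theorem eq_or_eq_or_eq_of_cubic_roots (hrs : r ≠ s) (hrt : r ≠ t) (hst : s ≠ t)
    (hr : r ^ 3 + b * r ^ 2 + c * r + d = 0) (hs : s ^ 3 + b * s ^ 2 + c * s + d = 0)
    (ht : t ^ 3 + b * t ^ 2 + c * t + d = 0) {l : R} (hl : l ^ 3 + b * l ^ 2 + c * l + d = 0) :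
    l = r ∨ l = s ∨ l = t := by
  rw [cubic_eq_mul_of_roots hrs hrt hst hr hs ht] at hl
  simpa only [mul_eq_zero, sub_eq_zero, or_assoc] using hl

end CubicFactorization

theorem exists_cubic_roots_of_sq_lt {a c : ℝ} (ha : 0 < a) (hac : a ^ 2 < c) :
    ∃ r s t : ℝ, r < -a ∧ -a < s ∧ s < 0 ∧ a < t ∧
      r ^ 3 + r ^ 2 - c * r - a ^ 2 = 0 ∧ s ^ 3 + s ^ 2 - c * s - a ^ 2 = 0 ∧
      t ^ 3 + t ^ 2 - c * t - a ^ 2 = 0 := by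
  set f : ℝ → ℝ := fun t ↦ t ^ 3 + t ^ 2 - c * t - a ^ 2
  have hf : Continuous f := by fun_prop
  have hgap : 0 < a * (c - a ^ 2) := mul_pos ha (sub_pos.mpr hac)
  have ha_lt : a < 1 + c := by nlinarith [sq_nonneg (a - 1)]
  have hf_neg_a : 0 < f (-a) := by simp only [f]; linarith
  have hf_zero : f 0 < 0 := by simp only [f]; nlinarith
  have hf_a : f a < 0 := by simp only [f]; linarith
  have hf_left : f (-(1 + c)) < 0 := by simp only [f]; nlinarith [sq_nonneg c]
  have hf_right : 0 < f (1 + c) := by simp only [f]; nlinarith [sq_nonneg c]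
  obtain ⟨r, ⟨-, hr⟩, hfr⟩ := intermediate_value_Ioo (by linarith) hf.continuousOn
    (show (0 : ℝ) ∈ Set.Ioo (f (-(1 + c))) (f (-a)) from ⟨hf_left, hf_neg_a⟩)
  obtain ⟨s, ⟨hs₁, hs₂⟩, hfs⟩ := intermediate_value_Ioo' (neg_nonpos.mpr ha.le)
    hf.continuousOn (show (0 : ℝ) ∈ Set.Ioo (f 0) (f (-a)) from ⟨hf_zero, hf_neg_a⟩)
  obtain ⟨t, ⟨ht, -⟩, hft⟩ := intermediate_value_Ioo ha_lt.le hf.continuousOn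
    (show (0 : ℝ) ∈ Set.Ioo (f a) (f (1 + c)) from ⟨hf_a, hf_right⟩)
  exact ⟨r, s, t, hr, hs₁, hs₂, ht, hfr, hfs, hft⟩

theorem cubic_three_roots (ν x : ℝ) (hν : ν ≠ 0) (hx : x ≠ 0) :
    ∃ lK lO lI : ℝ, lK < lO ∧ lO < lI ∧
      lK ^ 3 + lK ^ 2 - (ν ^ 2 + x ^ 2) * lK - ν ^ 2 = 0 ∧
      lO ^ 3 + lO ^ 2 - (ν ^ 2 + x ^ 2) * lO - ν ^ 2 = 0 ∧
      lI ^ 3 + lI ^ 2 - (ν ^ 2 + x ^ 2) * lI - ν ^ 2 = 0 ∧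
      lK < -|ν| ∧ -|ν| < lO ∧ lO < 0 ∧ |ν| < lI ∧
      ∀ l : ℝ, l ^ 3 + l ^ 2 - (ν ^ 2 + x ^ 2) * l - ν ^ 2 = 0 →
        l = lK ∨ l = lO ∨ l = lI := by
  have hν' : 0 < |ν| := abs_pos.mpr hν
  have hsq : |ν| ^ 2 < ν ^ 2 + x ^ 2 := by
    rw [sq_abs]
    exact lt_add_of_pos_right _ (by positivity)
  obtain ⟨lK, lO, lI, hK, hO₁, hO₂, hI, eK, eO, eI⟩ := exists_cubic_roots_of_sq_lt hν' hsq
  rw [sq_abs] at eK eO eI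
  have hKO : lK < lO := hK.trans hO₁
  have hOI : lO < lI := hO₂.trans (hν'.trans hI)
  refine ⟨lK, lO, lI, hKO, hOI, eK, eO, eI, hK, hO₁, hO₂, hI, fun l hl ↦ ?_⟩
  exact eq_or_eq_or_eq_of_cubic_roots (b := 1) (c := -(ν ^ 2 + x ^ 2)) (d := -ν ^ 2)
    hKO.ne (hKO.trans hOI).ne hOI.ne (by linear_combination eK) (by linear_combination eO)
    (by linear_combination eI) (by linear_combination hl)
end

section
/- Let ν ≠ 0, x > 0, and suppose λ is a real root of λ³ + λ² − (ν² + x²)λ − ν² = 0 with λ > |ν| (the largest root λ_I). Then, viewing λ_I as a function of x, λ_I is strictly increasing on (0, ∞). -/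
/-!
The cubic factors as `(λ + 1)(λ² - ν²) = x² λ`, so along the largest root `x²` is the function
`(λ + 1)(λ - ν² / λ)` of `λ`, a product of two positive increasing functions on `(|ν|, ∞)`.
Hence `x ↦ λ_I(x)` inverts a strictly increasing function and is itself strictly increasing.
-/

open Real

lemma sq_eq_of_cubic_eq_zero {ν x l : ℝ} (hl : l ≠ 0)
    (h : l ^ 3 + l ^ 2 - (ν ^ 2 + x ^ 2) * l - ν ^ 2 = 0) :
    x ^ 2 = (l + 1) * (l - ν ^ 2 / l) := by
  field_simp
  linear_combination -h

lemma strictMonoOn_cubic_param (ν : ℝ) :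
    StrictMonoOn (fun l : ℝ ↦ (l + 1) * (l - ν ^ 2 / l)) (Set.Ioi |ν|) := by
  intro a ha b hb hab
  have ha₀ : 0 < a := (abs_nonneg ν).trans_lt ha
  have hνa : ν ^ 2 / a ≤ a := by
    rw [div_le_iff₀ ha₀, ← sq_abs ν]
    nlinarith [abs_nonneg ν, Set.mem_Ioi.mp ha]
  have hνab : ν ^ 2 / b ≤ ν ^ 2 / a := div_le_div_of_nonneg_left (sq_nonneg ν) ha₀ hab.le
  exact mul_lt_mul'' (by linarith) (by linarith) (by linarith) (by linarith)

theorem largest_root_strictMono_general (ν : ℝ) (x₁ x₂ l₁ l₂ : ℝ)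
    (hx₁ : 0 < x₁) (hlt : x₁ < x₂)
    (h₁ : l₁ ^ 3 + l₁ ^ 2 - (ν ^ 2 + x₁ ^ 2) * l₁ - ν ^ 2 = 0) (hl₁ : |ν| < l₁)
    (h₂ : l₂ ^ 3 + l₂ ^ 2 - (ν ^ 2 + x₂ ^ 2) * l₂ - ν ^ 2 = 0) (hl₂ : |ν| < l₂) :
    l₁ < l₂ := by
  have hne : ∀ {l}, |ν| < l → l ≠ 0 := fun hl ↦ ((abs_nonneg ν).trans_lt hl).ne'
  rw [← (strictMonoOn_cubic_param ν).lt_iff_lt hl₁ hl₂, ← sq_eq_of_cubic_eq_zero (hne hl₁) h₁,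
    ← sq_eq_of_cubic_eq_zero (hne hl₂) h₂]
  exact pow_lt_pow_left₀ hlt hx₁.le two_ne_zero

theorem largest_root_strictMono (ν : ℝ) (hν : ν ≠ 0) (x₁ x₂ l₁ l₂ : ℝ)
    (hx₁ : 0 < x₁) (hx₂ : 0 < x₂) (hlt : x₁ < x₂)
    (h₁ : l₁ ^ 3 + l₁ ^ 2 - (ν ^ 2 + x₁ ^ 2) * l₁ - ν ^ 2 = 0) (hl₁ : |ν| < l₁)
    (h₂ : l₂ ^ 3 + l₂ ^ 2 - (ν ^ 2 + x₂ ^ 2) * l₂ - ν ^ 2 = 0) (hl₂ : |ν| < l₂) :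
    l₁ < l₂ :=
  largest_root_strictMono_general ν x₁ x₂ l₁ l₂ hx₁ hlt h₁ hl₁ h₂ hl₂
end
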